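/- For every n ≥ 1 and every eigenvalue λ ∈ ℂ of the five-diagonal matrix ℱ_n, the geometric multiplicity of λ equals 1; that is, the kernel of λ·I_n − ℱ_n is one-dimensional. -/

import Mathlib

open LaurentPolynomial Polynomial Complex ComplexConjugate

noncomputable section

/-- Reversed polynomial with conjugated coefficients: p*(z) = Σ conj(c_{m-k}) z^k. -/
def revc (p : Polynomial ℂ) : Polynomial ℂ := (p.map (starRingEnd ℂ)).reverse

/-- Monic orthogonal polynomials from Schur parameters: φ_0 = 1,
φ_n = z φ_{n-1} + a_n φ*_{n-1}. -/
def phi (a : ℕ → ℂ) : ℕ → Polynomial ℂ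
  | 0 => 1
  | n + 1 => X * phi a n + Polynomial.C (a (n + 1)) * revc (phi a n)

/-- ρ_n := |1 - |a_n|²|^{1/2}. -/
def rho (a : ℕ → ℂ) (n : ℕ) : ℝ := Real.sqrt |1 - ‖a n‖ ^ 2|

/-- ε_n := sgn (1 - |a_n|²). -/
def sgn (a : ℕ → ℂ) (n : ℕ) : ℝ := Real.sign (1 - ‖a n‖ ^ 2)

/-- ρ̂_n := ε_n ρ_n. -/
def rhoh (a : ℕ → ℂ) (n : ℕ) : ℝ := sgn a n * rho a n

/-- κ_n := Π_{k=1}^n ρ_k⁻¹ (κ_0 = 1). -/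
def kap (a : ℕ → ℂ) (n : ℕ) : ℝ := ∏ k ∈ Finset.Icc 1 n, (rho a k)⁻¹

/-- e_n := Π_{k=1}^n ε_k (e_0 = 1). -/
def esgn (a : ℕ → ℂ) (n : ℕ) : ℝ := ∏ k ∈ Finset.Icc 1 n, sgn a k

/-- Orthonormal polynomials φ̂_n := κ_n φ_n. -/
def phin (a : ℕ → ℂ) (n : ℕ) : Polynomial ℂ := Polynomial.C ((kap a n : ℝ) : ℂ) * phi a n

/-- Standard right orthonormal Laurent polynomials:
χ_{2m} = z^{-m} φ̂*_{2m}, χ_{2m+1} = z^{-m} φ̂_{2m+1}. -/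
def chi (a : ℕ → ℂ) (n : ℕ) : LaurentPolynomial ℂ :=
  T (-((n / 2 : ℕ) : ℤ)) * (if Even n then revc (phin a n) else phin a n).toLaurent

/-- The kernel K_n(z,y) := Σ_{k=0}^n e_k φ̂_k(z) conj(φ̂_k(y)). -/
def Kker (a : ℕ → ℂ) (n : ℕ) (z y : ℂ) : ℂ :=
  ∑ k ∈ Finset.range (n + 1),
    ((esgn a k : ℝ) : ℂ) * (phin a k).eval z * conj ((phin a k).eval y)

/-- Entries of the five-diagonal matrix, with rows/columns indexed from 1. -/
def Fent (a : ℕ → ℂ) (i j : ℕ) : ℂ :=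
  if i = 1 then
    if j = 1 then -a 1 else if j = 2 then (rho a 1 : ℂ) else 0
  else if i % 2 = 0 then
    if j + 1 = i then -(rhoh a (i - 1) : ℂ) * a i
    else if j = i then -conj (a (i - 1)) * a i
    else if j = i + 1 then -(rho a i : ℂ) * a (i + 1)
    else if j = i + 2 then (rho a i : ℂ) * (rho a (i + 1) : ℂ)
    else 0
  else
    if j + 2 = i then (rhoh a (i - 2) : ℂ) * (rhoh a (i - 1) : ℂ)
    else if j + 1 = i then conj (a (i - 2)) * (rhoh a (i - 1) : ℂ)
    else if j = i then -conj (a (i - 1)) * a i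
    else if j = i + 1 then conj (a (i - 1)) * (rho a i : ℂ)
    else 0

/-- The n×n five-diagonal matrix ℱ_n. -/
def Fmat (a : ℕ → ℂ) (n : ℕ) : Matrix (Fin n) (Fin n) ℂ :=
  Matrix.of fun i j => Fent a (i.val + 1) (j.val + 1)

/-- Evaluation of a Laurent polynomial at a nonzero complex number. -/
def levalAt (z : ℂ) (f : LaurentPolynomial ℂ) : ℂ :=
  Finsupp.sum (AddMonoidAlgebra.coeff f) fun k c => c * z ^ k

/-!
`ℱ = ℒℳ` with `ℒ = diag(1, Θ₂, Θ₄, …)`, `ℳ = diag(Θ₁, Θ₃, …)` and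
`Θₘ = [[-aₘ, ρₘ], [ρ̂ₘ, conj aₘ]]`, a block of determinant `-1` since `ρₘ ρ̂ₘ = 1 - |aₘ|²`.
Concretely, rows `2k+2` and `2k+3` of `ℱv` are `Θ₂ₖ₊₂` applied to the second entry of
`Θ₂ₖ₊₁ (v₂ₖ₊₁, v₂ₖ₊₂)` and the first entry of `Θ₂ₖ₊₃ (v₂ₖ₊₃, v₂ₖ₊₄)`.

For `λ ≠ 0` the eigenvalue equations, two rows at a time, determine an eigenvector recursively
from `v₁`, since every `ρₘ ≠ 0`. For `λ = 0`, inverting the blocks `Θₘ` shows that every entry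
of `ℳv` vanishes except the truncated last one, so `v` is determined by its last odd-indexed
entry. Either way a single coordinate is injective on the kernel of `λ - ℱₙ`.
-/

open scoped Matrix

theorem Submodule.finrank_eq_one_of_eval_injective {K ι : Type*} [Field K]
    {W : Submodule K (ι → K)} {v : ι → K} (hvW : v ∈ W) (hv : v ≠ 0) (i : ι)
    (h : ∀ w ∈ W, w i = 0 → w = 0) : Module.finrank K W = 1 := by
  have hvi : v i ≠ 0 := fun h0 => hv (h v hvW h0)
  refine (finrank_eq_one_iff_of_nonzero' (⟨v, hvW⟩ : W) (by simpa using hv)).2 fun w => ?_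
  refine ⟨w.1 i / v i, Subtype.ext ?_⟩
  have hw := h (w.1 - (w.1 i / v i) • v) (W.sub_mem w.2 (W.smul_mem _ hvW))
    (by simp [div_mul_cancel₀ _ hvi])
  simpa [sub_eq_zero, eq_comm] using hw

theorem Matrix.mem_ker_smul_one_sub_mulVecLin {ι K : Type*} [Fintype ι] [DecidableEq ι] [CommRing K]
    (A : Matrix ι ι K) (c : K) (w : ι → K) :
    w ∈ LinearMap.ker (c • (1 : Matrix ι ι K) - A).mulVecLin ↔ A *ᵥ w = c • w := by
  rw [LinearMap.mem_ker, Matrix.mulVecLin_apply, Matrix.sub_mulVec, Matrix.smul_mulVec,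
    Matrix.one_mulVec, sub_eq_zero, eq_comm]

lemma one_sub_norm_sq_ne_zero {z : ℂ} (hz : ‖z‖ ≠ 1) : 1 - ‖z‖ ^ 2 ≠ 0 := by
  rw [sub_ne_zero, ne_comm, Ne, pow_eq_one_iff_of_nonneg (norm_nonneg z) two_ne_zero]
  exact hz

lemma ofReal_rho_ne_zero {a : ℕ → ℂ} {m : ℕ} (h : ‖a m‖ ≠ 1) : (rho a m : ℂ) ≠ 0 := by
  rw [Complex.ofReal_ne_zero, rho, Real.sqrt_ne_zero', abs_pos]
  exact one_sub_norm_sq_ne_zero h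

lemma Real.sign_mul_abs (x : ℝ) : Real.sign x * |x| = x := by
  rcases lt_trichotomy x 0 with h | rfl | h
  · rw [Real.sign_of_neg h, abs_of_neg h, neg_one_mul, neg_neg]
  · rw [abs_zero, mul_zero]
  · rw [Real.sign_of_pos h, abs_of_pos h, one_mul]

lemma rho_mul_rhoh (a : ℕ → ℂ) (m : ℕ) :
    (rho a m : ℂ) * (rhoh a m : ℂ) = 1 - conj (a m) * a m := by
  have hreal : rho a m * rhoh a m = 1 - ‖a m‖ ^ 2 := by
    rw [rhoh, sgn, mul_left_comm, rho, Real.mul_self_sqrt (abs_nonneg _), Real.sign_mul_abs]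
  rw [← Complex.ofReal_mul, hreal, ← Complex.normSq_eq_conj_mul_self, Complex.normSq_eq_norm_sq]
  push_cast; ring

def thetaFst (a : ℕ → ℂ) (m : ℕ) (x y : ℂ) : ℂ := -a m * x + (rho a m : ℂ) * y

def thetaSnd (a : ℕ → ℂ) (m : ℕ) (x y : ℂ) : ℂ := (rhoh a m : ℂ) * x + conj (a m) * y

lemma eq_zero_of_theta_eq_zero {a : ℕ → ℂ} {m : ℕ} {x y : ℂ}
    (h₁ : thetaFst a m x y = 0) (h₂ : thetaSnd a m x y = 0) : x = 0 ∧ y = 0 := by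
  unfold thetaFst at h₁
  unfold thetaSnd at h₂
  have hdet := rho_mul_rhoh a m
  constructor
  · linear_combination (rho a m : ℂ) * h₂ - conj (a m) * h₁ - x * hdet
  · linear_combination (rhoh a m : ℂ) * h₁ + a m * h₂ - y * hdet

section VecExt

variable {R : Type*} [Semiring R]

-- `v` read with the 1-based indices of `Fent`, extended by zero outside `1, …, n`.
def vecExt {n : ℕ} (v : Fin n → R) (j : ℕ) : R :=
  if h : 1 ≤ j ∧ j ≤ n then v ⟨j - 1, by omega⟩ else 0

lemma vecExt_succ {n : ℕ} (v : Fin n → R) (i : Fin n) : vecExt v (i + 1) = v i := by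
  rw [vecExt, dif_pos (by omega)]
  rfl

lemma vecExt_of_lt {n : ℕ} (v : Fin n → R) {j : ℕ} (h : n < j) : vecExt v j = 0 := by
  rw [vecExt, dif_neg (by omega)]

lemma vecExt_zero {n : ℕ} (v : Fin n → R) : vecExt v 0 = 0 := by
  rw [vecExt, dif_neg (by omega)]

lemma vecExt_smul {n : ℕ} (c : R) (v : Fin n → R) (j : ℕ) : vecExt (c • v) j = c * vecExt v j := by
  unfold vecExt
  split_ifs <;> simp

lemma eq_zero_of_vecExt_pairs {n : ℕ} {v : Fin n → R}
    (h : ∀ k, vecExt v (2 * k + 1) = 0 ∧ vecExt v (2 * k + 2) = 0) : v = 0 := by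
  funext i
  rw [Pi.zero_apply, ← vecExt_succ v i]
  obtain ⟨k, hk | hk⟩ := Nat.even_or_odd' i
  · rw [hk]; exact (h k).1
  · rw [hk]; exact (h k).2

lemma vecExt_mulVec_eq_sum_Icc {n : ℕ} (f : ℕ → ℕ → R) (v : Fin n → R) {r : ℕ} (m : ℕ)
    (hr : 1 ≤ r ∧ r ≤ n) (hband : ∀ j, j < m ∨ m + 4 < j → f r j = 0) :
    vecExt (Matrix.of (fun i j : Fin n => f (i + 1) (j + 1)) *ᵥ v) r
      = ∑ j ∈ Finset.Icc m (m + 4), f r j * vecExt v j := by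
  have hrow : vecExt (Matrix.of (fun i j : Fin n => f (i + 1) (j + 1)) *ᵥ v) r
      = ∑ j ∈ Finset.Ico 1 (n + 1), f r j * vecExt v j := by
    obtain ⟨i, rfl⟩ : ∃ i : Fin n, r = i + 1 := ⟨⟨r - 1, by omega⟩, by simp; omega⟩
    rw [vecExt_succ, Finset.sum_Ico_eq_sum_range, Nat.add_sub_cancel,
      ← Fin.sum_univ_eq_sum_range (fun j => f (i + 1) (1 + j) * vecExt v (1 + j))]
    simp [Matrix.mulVec, dotProduct, add_comm 1, vecExt_succ]
  have hleft : ∑ j ∈ Finset.Ico 1 (n + 1), f r j * vecExt v j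
      = ∑ j ∈ Finset.range (n + m + 5), f r j * vecExt v j := by
    refine Finset.sum_subset (fun j hj => ?_) fun j _ hj => ?_
    · simp only [Finset.mem_Ico, Finset.mem_range] at hj ⊢; omega
    · simp only [Finset.mem_Ico, not_and_or, not_le, not_lt] at hj
      rcases hj with hj | hj
      · rw [Nat.lt_one_iff.mp hj, vecExt_zero, mul_zero]
      · rw [vecExt_of_lt v (by omega), mul_zero]
  have hright : ∑ j ∈ Finset.Icc m (m + 4), f r j * vecExt v j
      = ∑ j ∈ Finset.range (n + m + 5), f r j * vecExt v j := by
    refine Finset.sum_subset (fun j hj => ?_) fun j _ hj => ?_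
    · simp only [Finset.mem_Icc, Finset.mem_range] at hj ⊢; omega
    · simp only [Finset.mem_Icc, not_and_or, not_le] at hj
      rw [hband j hj, zero_mul]
  rw [hrow, hleft, hright]

end VecExt

lemma Finset.sum_Icc_five {M : Type*} [AddCommMonoid M] (f : ℕ → M) (m : ℕ) :
    ∑ j ∈ Finset.Icc m (m + 4), f j = f m + f (m + 1) + f (m + 2) + f (m + 3) + f (m + 4) := by
  rw [Finset.sum_Icc_succ_top (by omega), Finset.sum_Icc_succ_top (by omega : m ≤ m + 2 + 1),
    Finset.sum_Icc_succ_top (by omega : m ≤ m + 1 + 1), Finset.sum_Icc_succ_top (by omega),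
    Finset.Icc_self, Finset.sum_singleton]

lemma Fent_eq_zero_of_band (a : ℕ → ℂ) {i j : ℕ} (h : j + 2 < i ∨ i + 2 < j) : Fent a i j = 0 := by
  unfold Fent
  split_ifs <;> first | rfl | omega

section Rows

variable (a : ℕ → ℂ) {n : ℕ} (v : Fin n → ℂ)

lemma vecExt_Fmat_mulVec_one (hn : 1 ≤ n) :
    vecExt (Fmat a n *ᵥ v) 1 = thetaFst a 1 (vecExt v 1) (vecExt v 2) := by
  rw [Fmat, vecExt_mulVec_eq_sum_Icc _ v 0 ⟨le_rfl, hn⟩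
    fun j hj => Fent_eq_zero_of_band a (by omega), Finset.sum_Icc_five]
  simp (disch := omega) only [Fent, thetaFst, if_pos, if_neg, if_true]
  simp [vecExt_zero]

lemma vecExt_Fmat_mulVec_even (k : ℕ) (hk : 2 * k + 2 ≤ n) :
    vecExt (Fmat a n *ᵥ v) (2 * k + 2)
      = thetaFst a (2 * k + 2)
          (thetaSnd a (2 * k + 1) (vecExt v (2 * k + 1)) (vecExt v (2 * k + 2)))
          (thetaFst a (2 * k + 3) (vecExt v (2 * k + 3)) (vecExt v (2 * k + 4))) := by
  rw [Fmat, vecExt_mulVec_eq_sum_Icc _ v (2 * k) ⟨by omega, hk⟩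
    fun j hj => Fent_eq_zero_of_band a (by omega), Finset.sum_Icc_five]
  simp (disch := omega) only [Fent, thetaFst, thetaSnd, if_pos, if_neg, if_true,
    Nat.add_sub_cancel, Nat.add_one_sub_one]
  ring

lemma vecExt_Fmat_mulVec_odd (k : ℕ) (hk : 2 * k + 3 ≤ n) :
    vecExt (Fmat a n *ᵥ v) (2 * k + 3)
      = thetaSnd a (2 * k + 2)
          (thetaSnd a (2 * k + 1) (vecExt v (2 * k + 1)) (vecExt v (2 * k + 2)))
          (thetaFst a (2 * k + 3) (vecExt v (2 * k + 3)) (vecExt v (2 * k + 4))) := by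
  rw [Fmat, vecExt_mulVec_eq_sum_Icc _ v (2 * k + 1) ⟨by omega, hk⟩
    fun j hj => Fent_eq_zero_of_band a (by omega), Finset.sum_Icc_five]
  simp (disch := omega) only [Fent, thetaFst, thetaSnd, if_pos, if_neg, if_true,
    Nat.reduceSubDiff]
  ring

end Rows

lemma thetaSnd_zero_left (a : ℕ → ℂ) (m : ℕ) (y : ℂ) : thetaSnd a m 0 y = conj (a m) * y := by
  rw [thetaSnd, mul_zero, zero_add]

lemma thetaFst_zero_left_eq_zero_iff {a : ℕ → ℂ} {m : ℕ} (h : ‖a m‖ ≠ 1) {y : ℂ} :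
    thetaFst a m 0 y = 0 ↔ y = 0 := by
  rw [thetaFst, mul_zero, zero_add, mul_eq_zero_iff_left (ofReal_rho_ne_zero h)]

section Kernel

variable {a : ℕ → ℂ} (ha : ∀ m, 1 ≤ m → ‖a m‖ ≠ 1) {n : ℕ} (hn : 1 ≤ n) {v : Fin n → ℂ}
include ha hn

lemma Fmat_eigenvector_eq_zero_of_head_eq_zero {lam : ℂ} (hlam : lam ≠ 0)
    (hv : Fmat a n *ᵥ v = lam • v) (hhead : vecExt v 1 = 0) : v = 0 := by
  have row (r : ℕ) : lam * vecExt v r = vecExt (Fmat a n *ᵥ v) r := by rw [hv, vecExt_smul]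
  refine eq_zero_of_vecExt_pairs fun k => ?_
  induction k with
  | zero =>
    have h := row 1
    rw [vecExt_Fmat_mulVec_one a v hn, hhead, mul_zero, eq_comm,
      thetaFst_zero_left_eq_zero_iff (ha 1 le_rfl)] at h
    exact ⟨hhead, h⟩
  | succ k ih =>
    show vecExt v (2 * k + 3) = 0 ∧ vecExt v (2 * k + 4) = 0
    by_cases hk : 2 * k + 3 ≤ n
    swap
    · exact ⟨vecExt_of_lt v (by omega), vecExt_of_lt v (by omega)⟩
    have hE := row (2 * k + 2)
    have hO := row (2 * k + 3)
    rw [vecExt_Fmat_mulVec_even a v k (by omega), ih.1, ih.2, mul_zero, thetaSnd_zero_left,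
      mul_zero, eq_comm, thetaFst_zero_left_eq_zero_iff (ha _ (by omega))] at hE
    rw [vecExt_Fmat_mulVec_odd a v k hk, ih.1, ih.2, thetaSnd_zero_left, mul_zero, hE,
      thetaSnd_zero_left, mul_zero, mul_eq_zero_iff_left hlam] at hO
    rw [hO, thetaFst_zero_left_eq_zero_iff (ha _ (by omega))] at hE
    exact ⟨hO, hE⟩

lemma Fmat_null_vector_eq_zero_of_last_odd_eq_zero (hv : Fmat a n *ᵥ v = 0)
    (hlast : vecExt v (2 * ((n - 1) / 2) + 1) = 0) : v = 0 := by
  have row (r : ℕ) : vecExt (Fmat a n *ᵥ v) r = 0 := by simp [hv, vecExt]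
  have hpair (k : ℕ) (hk : 2 * k + 3 ≤ n) :
      thetaSnd a (2 * k + 1) (vecExt v (2 * k + 1)) (vecExt v (2 * k + 2)) = 0 ∧
        thetaFst a (2 * k + 3) (vecExt v (2 * k + 3)) (vecExt v (2 * k + 4)) = 0 :=
    eq_zero_of_theta_eq_zero ((vecExt_Fmat_mulVec_even a v k (by omega)).symm.trans (row _))
      ((vecExt_Fmat_mulVec_odd a v k hk).symm.trans (row _))
  have hfst (k : ℕ) (hk : 2 * k + 1 ≤ n) :
      thetaFst a (2 * k + 1) (vecExt v (2 * k + 1)) (vecExt v (2 * k + 2)) = 0 := by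
    cases k with
    | zero => exact (vecExt_Fmat_mulVec_one a v hn).symm.trans (row 1)
    | succ k => exact (hpair k (by omega)).2
  refine eq_zero_of_vecExt_pairs fun k => ?_
  by_cases hk : 2 * k + 3 ≤ n
  · exact eq_zero_of_theta_eq_zero (hfst k (by omega)) (hpair k hk).1
  by_cases hk' : 2 * k + 1 ≤ n
  · have hodd : vecExt v (2 * k + 1) = 0 := by
      rwa [show 2 * ((n - 1) / 2) = 2 * k by omega] at hlast
    have heven := hfst k hk'
    rw [hodd, thetaFst_zero_left_eq_zero_iff (ha _ (by omega))] at heven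
    exact ⟨hodd, heven⟩
  · exact ⟨vecExt_of_lt v (by omega), vecExt_of_lt v (by omega)⟩

end Kernel

/-- Theorem 3.1 (ii): every eigenvalue of the five-diagonal matrix ℱ_n
has geometric multiplicity 1, i.e. ker(λ I_n − ℱ_n) is one-dimensional. -/
theorem Fmat_geometric_multiplicity_one
    (a : ℕ → ℂ) (ha : ∀ n, 1 ≤ n → ‖a n‖ ≠ 1)
    (n : ℕ) (hn : 1 ≤ n) (lam : ℂ)
    (hev : ∃ v : Fin n → ℂ, v ≠ 0 ∧ (Fmat a n).mulVec v = lam • v) :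
    Module.finrank ℂ
      (LinearMap.ker (Matrix.mulVecLin (lam • (1 : Matrix (Fin n) (Fin n) ℂ) - Fmat a n)))
      = 1 := by
  obtain ⟨v, hv0, hv⟩ := hev
  have mem_ker := Matrix.mem_ker_smul_one_sub_mulVecLin (Fmat a n) lam
  by_cases hlam : lam = 0
  · refine Submodule.finrank_eq_one_of_eval_injective ((mem_ker v).2 hv) hv0
      ⟨2 * ((n - 1) / 2), by omega⟩ fun w hw hlast => ?_
    rw [mem_ker, hlam, zero_smul] at hw
    exact Fmat_null_vector_eq_zero_of_last_odd_eq_zero ha hn hw ((vecExt_succ w ⟨_, _⟩).trans hlast)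
  · refine Submodule.finrank_eq_one_of_eval_injective ((mem_ker v).2 hv) hv0 ⟨0, hn⟩
      fun w hw hhead => ?_
    exact Fmat_eigenvector_eq_zero_of_head_eq_zero ha hn hlam ((mem_ker w).1 hw)
      ((vecExt_succ w ⟨0, hn⟩).trans hhead)
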